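/- Let μ be the Haar probability measure on the compact group U(2). Let f, g : U(2) → ℂ be continuous functions that are both bi-invariant under the subgroup U(1) = {diag(1, e^{iθ}) : θ ∈ ℝ}, i.e., f(w₁·u·w₂) = f(u) and g(w₁·u·w₂) = g(u) for all u ∈ U(2) and w₁, w₂ ∈ U(1). Then the convolution product of f and g with respect to μ is commutative: for every u ∈ U(2), ∫ f(v)·g(v⁻¹·u) dμ(v) = ∫ g(v)·f(v⁻¹·u) dμ(v). (This expresses that (U(2), U(1)) is a Gelfand pair.) -/

import Mathlib

open MeasureTheory

noncomputable instance : MeasurableSpace (Matrix.unitaryGroup (Fin 2) ℂ) := borel _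

instance : BorelSpace (Matrix.unitaryGroup (Fin 2) ℂ) := ⟨rfl⟩

/-- Members of the copy of `U(1)` inside `U(2)` given by `{diag(1, e^{iθ}) : θ ∈ ℝ}`. -/
def IsU1 (w : Matrix.unitaryGroup (Fin 2) ℂ) : Prop :=
  ∃ θ : ℝ, (w : Matrix (Fin 2) (Fin 2) ℂ) = Matrix.diagonal ![1, Complex.exp (θ * Complex.I)]

/-!
Gelfand's trick. On a compact group the left-invariant probability measure is the Haar measure,
so by uniqueness it is invariant under inversion and under the anti-automorphism `σ u = uᵀ`.
For a unitary `2 × 2` matrix `u` one has `|u₀₁| = |u₁₀|`, hence `uᵀ = w u w⁻¹` with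
`w = diag(1, e^{iθ})`, `θ = arg u₀₁ - arg u₁₀`; so `σ` preserves the `U(1)`-double cosets and
bi-invariant functions are `σ`-invariant. Substituting `v ↦ v⁻¹` and `v ↦ σ v` in the
convolution gives `(f ⋆ g)(u) = (g ⋆ f)(σ u)`, and `g ⋆ f` is again bi-invariant, so
`(g ⋆ f)(σ u) = (g ⋆ f)(u)`.
-/

open Measure Function Set

section BiInvariant

variable {G α : Type*} [Group G] {H : Set G} {f : G → α}

def IsBiInvariant (H : Set G) (f : G → α) : Prop :=
  ∀ u w₁ w₂, w₁ ∈ H → w₂ ∈ H → f (w₁ * u * w₂) = f u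

theorem IsBiInvariant.apply_mul_left (hf : IsBiInvariant H f) (hH : (1 : G) ∈ H) {w : G}
    (hw : w ∈ H) (u : G) : f (w * u) = f u := by
  simpa using hf u w 1 hw hH

theorem IsBiInvariant.apply_mul_right (hf : IsBiInvariant H f) (hH : (1 : G) ∈ H) {w : G}
    (hw : w ∈ H) (u : G) : f (u * w) = f u := by
  simpa using hf u 1 w hH hw

theorem IsBiInvariant.apply_eq_of_mem_doubleCoset (hf : IsBiInvariant H f) {u v : G}
    (huv : ∃ w₁ ∈ H, ∃ w₂ ∈ H, v = w₁ * u * w₂) : f v = f u := by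
  obtain ⟨w₁, hw₁, w₂, hw₂, rfl⟩ := huv
  exact hf u w₁ w₂ hw₁ hw₂

end BiInvariant

section Convolution

variable {G R : Type*} [Group G] [MeasurableSpace G]
  [NormedCommRing R] [NormedAlgebra ℝ R] (μ : Measure G)

noncomputable def mulConvolution (f g : G → R) (u : G) : R :=
  ∫ v, f v * g (v⁻¹ * u) ∂μ

variable {μ} {f g : G → R}

theorem mulConvolution_mul_right {w : G} (hg : ∀ u, g (u * w) = g u) (u : G) :
    mulConvolution μ f g (u * w) = mulConvolution μ f g u := by
  simp only [mulConvolution, ← mul_assoc, hg]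

theorem mulConvolution_mul_left [MeasurableMul G] [μ.IsMulLeftInvariant] {w : G}
    (hf : ∀ u, f (w * u) = f u) (u : G) :
    mulConvolution μ f g (w * u) = mulConvolution μ f g u := by
  rw [mulConvolution, mulConvolution, ← integral_mul_left_eq_self _ w]
  simp only [mul_inv_rev, mul_assoc, inv_mul_cancel_left, hf]

theorem IsBiInvariant.mulConvolution [MeasurableMul G] [μ.IsMulLeftInvariant] {H : Set G}
    (hH : (1 : G) ∈ H) (hf : IsBiInvariant H f) (hg : IsBiInvariant H g) :
    IsBiInvariant H (mulConvolution μ f g) := by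
  intro u w₁ w₂ hw₁ hw₂
  rw [mulConvolution_mul_right (hg.apply_mul_right hH hw₂),
    mulConvolution_mul_left (hf.apply_mul_left hH hw₁)]

theorem mulConvolution_eq_mulConvolution_antiHom [MeasurableMul G] [MeasurableInv G]
    [μ.IsMulLeftInvariant] [μ.IsInvInvariant] {σ : G → G}
    (hσ_mul : ∀ a b, σ (a * b) = σ b * σ a) (hσ : Involutive σ) (hσ_meas : Measurable σ)
    (hσμ : MeasurePreserving σ μ μ) (hfσ : ∀ u, f (σ u) = f u) (hgσ : ∀ u, g (σ u) = g u)
    (u : G) : mulConvolution μ f g u = mulConvolution μ g f (σ u) := by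
  have hσ_one : σ 1 = 1 := by
    simpa using (hσ_mul 1 1).symm
  have hσ_inv (a : G) : σ a⁻¹ = (σ a)⁻¹ :=
    eq_inv_of_mul_eq_one_left (by rw [← hσ_mul, mul_inv_cancel, hσ_one])
  have hσ_emb : MeasurableEmbedding σ :=
    (MeasurableEquiv.ofInvolutive σ hσ hσ_meas).measurableEmbedding
  calc mulConvolution μ f g u
      = ∫ v, f (u * v) * g v⁻¹ ∂μ := by
        rw [mulConvolution, ← integral_mul_left_eq_self _ u]
        simp only [mul_inv_rev, inv_mul_cancel_right]
    _ = ∫ v, f (u * v⁻¹) * g v ∂μ := by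
        rw [← integral_inv_eq_self]
        simp only [inv_inv]
    _ = ∫ v, f ((σ v)⁻¹ * σ u) * g v ∂μ := by
        simp only [← hfσ (u * _), hσ_mul, hσ_inv]
    _ = ∫ v, f (v⁻¹ * σ u) * g v ∂μ := by
        conv_rhs => rw [← hσμ.integral_comp hσ_emb]
        simp only [hgσ]
    _ = mulConvolution μ g f (σ u) := by
        simp only [mulConvolution, mul_comm]

theorem mulConvolution_comm_of_antiHom [MeasurableMul G] [MeasurableInv G]
    [μ.IsMulLeftInvariant] [μ.IsInvInvariant] {H : Set G} (hH : (1 : G) ∈ H) {σ : G → G}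
    (hσ_mul : ∀ a b, σ (a * b) = σ b * σ a) (hσ : Involutive σ) (hσ_meas : Measurable σ)
    (hσμ : MeasurePreserving σ μ μ) (hσH : ∀ u, ∃ w₁ ∈ H, ∃ w₂ ∈ H, σ u = w₁ * u * w₂)
    (hf : IsBiInvariant H f) (hg : IsBiInvariant H g) :
    mulConvolution μ f g = mulConvolution μ g f := by
  funext u
  rw [mulConvolution_eq_mulConvolution_antiHom hσ_mul hσ hσ_meas hσμ
    (fun v => hf.apply_eq_of_mem_doubleCoset (hσH v))
    (fun v => hg.apply_eq_of_mem_doubleCoset (hσH v))]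
  exact (hg.mulConvolution hH hf).apply_eq_of_mem_doubleCoset (hσH u)

end Convolution

section CompactGroup

variable {G : Type*} [Group G] [TopologicalSpace G] [IsTopologicalGroup G] [CompactSpace G]
  [MeasurableSpace G] [BorelSpace G]

theorem isHaarMeasure_of_isProbabilityMeasure (μ : Measure G) [IsProbabilityMeasure μ]
    [μ.IsMulLeftInvariant] : μ.IsHaarMeasure :=
  have : μ.IsOpenPosMeasure :=
    isOpenPosMeasure_of_mulLeftInvariant_of_compact univ isCompact_univ (by simp)
  { }

theorem eq_of_isMulLeftInvariant_of_isProbabilityMeasure (μ ν : Measure G)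
    [IsProbabilityMeasure μ] [μ.IsMulLeftInvariant] [IsProbabilityMeasure ν]
    [ν.IsMulLeftInvariant] : μ = ν :=
  have := isHaarMeasure_of_isProbabilityMeasure μ
  have := isHaarMeasure_of_isProbabilityMeasure ν
  isHaarMeasure_eq_of_isProbabilityMeasure μ ν

variable (μ : Measure G) [IsProbabilityMeasure μ] [μ.IsMulLeftInvariant]

theorem isMulRightInvariant_of_isProbabilityMeasure : μ.IsMulRightInvariant where
  map_mul_right_eq_self γ :=
    have := isProbabilityMeasure_map (μ := μ) (measurable_mul_const γ).aemeasurable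
    eq_of_isMulLeftInvariant_of_isProbabilityMeasure _ μ

theorem isInvInvariant_of_isProbabilityMeasure : μ.IsInvInvariant where
  inv_eq_self :=
    have := isMulRightInvariant_of_isProbabilityMeasure μ
    have : IsProbabilityMeasure μ.inv := ⟨by simp [inv_apply]⟩
    eq_of_isMulLeftInvariant_of_isProbabilityMeasure _ μ

theorem measurePreserving_of_antiHom {σ : G → G} (hσ_mul : ∀ a b, σ (a * b) = σ b * σ a)
    (hσ : Involutive σ) (hσ_meas : Measurable σ) : MeasurePreserving σ μ μ := by
  have := isMulRightInvariant_of_isProbabilityMeasure μ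
  have : (μ.map σ).IsMulLeftInvariant := ⟨fun γ => by
    have hσγ : (γ * ·) ∘ σ = σ ∘ (· * σ γ) := by
      funext v
      simp [hσ_mul, hσ γ]
    rw [map_map (measurable_const_mul γ) hσ_meas, hσγ, ← map_map hσ_meas (measurable_mul_const _),
      map_mul_right_eq_self]⟩
  have := isProbabilityMeasure_map (μ := μ) hσ_meas.aemeasurable
  exact ⟨hσ_meas, eq_of_isMulLeftInvariant_of_isProbabilityMeasure _ μ⟩

end CompactGroup

section UnitaryGroup

open Matrix Complex

instance Matrix.UnitaryGroup.instCompactSpace {n 𝕜 : Type*} [Fintype n] [DecidableEq n]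
    [RCLike 𝕜] : CompactSpace (unitaryGroup n 𝕜) :=
  have hball : IsCompact (univ.pi fun _ => univ.pi fun _ => Metric.closedBall 0 1 :
      Set (Matrix n n 𝕜)) :=
    isCompact_univ_pi fun _ => isCompact_univ_pi fun _ => isCompact_closedBall 0 1
  isCompact_iff_compactSpace.mp <| hball.of_isClosed_subset (isClosed_unitary (R := Matrix n n 𝕜))
    fun _ hU i _ j _ => by simpa using entry_norm_bound_of_unitary hU i j

namespace Matrix.UnitaryGroup

variable {n α : Type*} [Fintype n] [DecidableEq n] [CommRing α] [StarRing α]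

theorem transpose_mul (U V : unitaryGroup n α) : transpose (U * V) = transpose V * transpose U :=
  Subtype.ext (Matrix.transpose_mul _ _)

theorem transpose_involutive : Involutive (transpose : unitaryGroup n α → unitaryGroup n α) :=
  fun _ => Subtype.ext (Matrix.transpose_transpose _)

theorem continuous_transpose [TopologicalSpace α] :
    Continuous (transpose : unitaryGroup n α → unitaryGroup n α) :=
  continuous_induced_rng.2 continuous_subtype_val.matrix_transpose

theorem diagonal_mem_unitaryGroup {d : n → α} (hd : ∀ i, star (d i) * d i = 1) :
    diagonal d ∈ unitaryGroup n α := by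
  rw [mem_unitaryGroup_iff', star_eq_conjTranspose, diagonal_conjTranspose, diagonal_mul_diagonal,
    ← diagonal_one]
  exact congrArg diagonal (funext hd)

end Matrix.UnitaryGroup

noncomputable def diagU1 (θ : ℝ) : unitaryGroup (Fin 2) ℂ :=
  ⟨diagonal ![1, exp (θ * I)], UnitaryGroup.diagonal_mem_unitaryGroup fun i => by
    fin_cases i
    · simp
    · simp [← exp_conj, ← exp_add]⟩

theorem isU1_diagU1 (θ : ℝ) : IsU1 (diagU1 θ) := ⟨θ, rfl⟩

theorem isU1_one : IsU1 1 :=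
  ⟨0, by
    rw [UnitaryGroup.one_val, ← diagonal_one]
    congr with i
    fin_cases i <;> simp⟩

theorem norm_apply_zero_one_eq_norm_apply_one_zero (U : unitaryGroup (Fin 2) ℂ) :
    ‖(U : Matrix (Fin 2) (Fin 2) ℂ) 0 1‖ = ‖(U : Matrix (Fin 2) (Fin 2) ℂ) 1 0‖ := by
  have hrow := congrFun (congrFun (mem_unitaryGroup_iff.mp U.2) 0) 0
  have hcol := congrFun (congrFun (mem_unitaryGroup_iff'.mp U.2) 0) 0
  simp only [mul_apply, Fin.sum_univ_two, star_eq_conjTranspose, conjTranspose_apply,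
    RCLike.star_def, mul_conj', conj_mul', one_apply_eq] at hrow hcol
  have hsq : (‖(U : Matrix (Fin 2) (Fin 2) ℂ) 0 1‖ ^ 2 : ℂ) =
      ‖(U : Matrix (Fin 2) (Fin 2) ℂ) 1 0‖ ^ 2 := by
    linear_combination hrow - hcol
  exact (sq_eq_sq₀ (norm_nonneg _) (norm_nonneg _)).mp (by exact_mod_cast hsq)

theorem mul_exp_arg_sub_arg_mul_I {b c : ℂ} (h : ‖b‖ = ‖c‖) :
    c * exp ((arg b - arg c) * I) = b := by
  calc c * exp ((arg b - arg c) * I)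
      = ‖c‖ * exp (arg c * I) * exp ((arg b - arg c) * I) := by rw [norm_mul_exp_arg_mul_I]
    _ = ‖b‖ * exp (arg b * I) := by rw [h, mul_assoc, ← exp_add]; ring_nf
    _ = b := norm_mul_exp_arg_mul_I b

theorem exists_isU1_transpose_eq_mul_mul (U : unitaryGroup (Fin 2) ℂ) :
    ∃ w₁ ∈ {w | IsU1 w}, ∃ w₂ ∈ {w | IsU1 w}, UnitaryGroup.transpose U = w₁ * U * w₂ := by
  set θ := arg ((U : Matrix (Fin 2) (Fin 2) ℂ) 0 1) - arg ((U : Matrix (Fin 2) (Fin 2) ℂ) 1 0)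
  refine ⟨diagU1 θ, isU1_diagU1 θ, diagU1 (-θ), isU1_diagU1 (-θ), ?_⟩
  have h10 := mul_exp_arg_sub_arg_mul_I (norm_apply_zero_one_eq_norm_apply_one_zero U)
  have h01 := mul_exp_arg_sub_arg_mul_I (norm_apply_zero_one_eq_norm_apply_one_zero U).symm
  ext i j
  simp only [UnitaryGroup.transpose_coe, transpose_apply, Submonoid.coe_mul, diagU1,
    diagonal_mul, mul_diagonal]
  fin_cases i <;> fin_cases j
  · simp
  · simpa [θ] using h01.symm
  · simpa [θ] using ((mul_comm _ _).trans h10).symm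
  · simp [mul_right_comm, ← exp_add]

end UnitaryGroup

theorem gelfand_pair_U2_U1_general
    (μ : Measure (Matrix.unitaryGroup (Fin 2) ℂ))
    [IsProbabilityMeasure μ] [μ.IsMulLeftInvariant]
    (f g : Matrix.unitaryGroup (Fin 2) ℂ → ℂ)
    (hfbi : ∀ (u w₁ w₂ : Matrix.unitaryGroup (Fin 2) ℂ), IsU1 w₁ → IsU1 w₂ →
      f (w₁ * u * w₂) = f u)
    (hgbi : ∀ (u w₁ w₂ : Matrix.unitaryGroup (Fin 2) ℂ), IsU1 w₁ → IsU1 w₂ →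
      g (w₁ * u * w₂) = g u) :
    ∀ u : Matrix.unitaryGroup (Fin 2) ℂ,
      ∫ v, f v * g (v⁻¹ * u) ∂μ = ∫ v, g v * f (v⁻¹ * u) ∂μ := by
  have := isInvInvariant_of_isProbabilityMeasure μ
  have hσ_meas := (Matrix.UnitaryGroup.continuous_transpose (n := Fin 2) (α := ℂ)).measurable
  have hσμ := measurePreserving_of_antiHom μ Matrix.UnitaryGroup.transpose_mul
    Matrix.UnitaryGroup.transpose_involutive hσ_meas
  exact congrFun <| mulConvolution_comm_of_antiHom (H := {w | IsU1 w}) isU1_one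
    Matrix.UnitaryGroup.transpose_mul Matrix.UnitaryGroup.transpose_involutive hσ_meas hσμ
    exists_isU1_transpose_eq_mul_mul hfbi hgbi

theorem gelfand_pair_U2_U1
    (μ : Measure (Matrix.unitaryGroup (Fin 2) ℂ))
    [IsProbabilityMeasure μ] [μ.IsMulLeftInvariant]
    (f g : Matrix.unitaryGroup (Fin 2) ℂ → ℂ)
    (hf : Continuous f) (hg : Continuous g)
    (hfbi : ∀ (u w₁ w₂ : Matrix.unitaryGroup (Fin 2) ℂ), IsU1 w₁ → IsU1 w₂ →
      f (w₁ * u * w₂) = f u)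
    (hgbi : ∀ (u w₁ w₂ : Matrix.unitaryGroup (Fin 2) ℂ), IsU1 w₁ → IsU1 w₂ →
      g (w₁ * u * w₂) = g u) :
    ∀ u : Matrix.unitaryGroup (Fin 2) ℂ,
      ∫ v, f v * g (v⁻¹ * u) ∂μ = ∫ v, g v * f (v⁻¹ * u) ∂μ :=
  gelfand_pair_U2_U1_general μ f g hfbi hgbi
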